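/- arXiv:1912.05739 — 3 statements merged into one kernel-verified Lean document; each statement's English description precedes it below -/
import Mathlib

section
/- A zero-mean nonsingular Gaussian sequence [x_k], k ∈ [0,N], is reciprocal if and only if it is [k_1,N]-CM_F for every k_1 ∈ [0,N] (intervals of length less than 3 being trivially CM) and it is CM_L. -/
open MeasureTheory ProbabilityTheory Matrix
open scoped NNReal

namespace CMSeqPaper

variable {Ω : Type*} [MeasurableSpace Ω]

/-- Square `d × d` real matrices. -/
abbrev Mat (d : ℕ) := Matrix (Fin d) (Fin d) ℝ

/-- `X` is a zero-mean jointly Gaussian random vector with covariance matrix `C`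
(Cramér–Wold characterization: every linear functional of `X` is a centered real
Gaussian with the induced variance). -/
def IsZeroMeanGaussian {ι : Type*} [Fintype ι] (μ : Measure Ω)
    (X : Ω → ι → ℝ) (C : Matrix ι ι ℝ) : Prop :=
  ∀ l : ι → ℝ,
    μ.map (fun ω => ∑ i, l i * X ω i) = gaussianReal 0 (l ⬝ᵥ C.mulVec l).toNNReal

/-- The stacked vector over times `0, …, N` of a `d`-dimensional sequence. -/
def stack (N d : ℕ) (x : ℕ → Ω → Fin d → ℝ) : Ω → Fin (N + 1) × Fin d → ℝ :=
  fun ω p => x (p.1 : ℕ) ω p.2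

/-- `[x_k]`, `k ∈ [0,N]`, is a zero-mean nonsingular Gaussian sequence whose stacked
vector has (positive definite) covariance matrix `C`. -/
def ZMNG (N d : ℕ) (μ : Measure Ω) (x : ℕ → Ω → Fin d → ℝ)
    (C : Matrix (Fin (N + 1) × Fin d) (Fin (N + 1) × Fin d) ℝ) : Prop :=
  (∀ k, k ≤ N → Measurable (x k)) ∧
    IsZeroMeanGaussian μ (stack N d x) C ∧ C.PosDef

/-- The σ-algebra generated by the states at the times in `S`. -/
def sigmaOf {d : ℕ} (x : ℕ → Ω → Fin d → ℝ) (S : Set ℕ) : MeasurableSpace Ω :=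
  ⨆ i ∈ S, MeasurableSpace.comap (x i) inferInstance

/-- The conditional distribution of `x k` given the states at the times in `S`
coincides (a.e.) with the conditional distribution of `x k` given the states at the
times in `T`. -/
def CondEq {d : ℕ} (μ : Measure Ω) (x : ℕ → Ω → Fin d → ℝ) (k : ℕ)
    (S T : Set ℕ) : Prop :=
  ∀ A : Set (Fin d → ℝ), MeasurableSet A →
    μ[A.indicator (fun _ => (1 : ℝ)) ∘ x k | sigmaOf x S]
      =ᵐ[μ] μ[A.indicator (fun _ => (1 : ℝ)) ∘ x k | sigmaOf x T]

/-- `[x_k]` is `[k₁,k₂]`-CM_c: for all `k₁ ≤ j < k ≤ k₂`, the conditional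
distribution of `x k` given `(x_{k₁}, …, x_j, x_c)` equals the one given `(x_j, x_c)`. -/
def IsCM {d : ℕ} (μ : Measure Ω) (x : ℕ → Ω → Fin d → ℝ) (k₁ k₂ c : ℕ) : Prop :=
  ∀ j k, k₁ ≤ j → j < k → k ≤ k₂ →
    CondEq μ x k (Set.Icc k₁ j ∪ {c}) ({j} ∪ {c})

/-- `[x_k]` is Markov on the index interval `[a,b]`. -/
def IsMarkovOn {d : ℕ} (μ : Measure Ω) (x : ℕ → Ω → Fin d → ℝ) (a b : ℕ) : Prop :=
  ∀ j k, a ≤ j → j < k → k ≤ b → CondEq μ x k (Set.Icc a j) {j}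

/-- `[x_k]` is reciprocal on `[0,N]`. -/
def IsReciprocal {d : ℕ} (μ : Measure Ω) (x : ℕ → Ω → Fin d → ℝ) (N : ℕ) : Prop :=
  ∀ j k l, j < k → k < l → l ≤ N →
    CondEq μ x k (Set.Icc 0 j ∪ Set.Icc l N) ({j} ∪ {l})

/-- Block `(i,j)` of the block matrix `A` is zero. -/
def BlockZero {n d : ℕ} (A : Matrix (Fin n × Fin d) (Fin n × Fin d) ℝ)
    (i j : Fin n) : Prop :=
  ∀ a b, A (i, a) (j, b) = 0

/-- `|i - j| ≥ 2` for block indices. -/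
def Far {n : ℕ} (i j : Fin n) : Prop :=
  (i : ℕ) + 2 ≤ (j : ℕ) ∨ (j : ℕ) + 2 ≤ (i : ℕ)

/-- Block tri-diagonal: every block `(i,j)` with `|i-j| ≥ 2` is zero. -/
def BlockTriDiag {n d : ℕ} (A : Matrix (Fin n × Fin d) (Fin n × Fin d) ℝ) : Prop :=
  ∀ i j, Far i j → BlockZero A i j

/-- The CM_L form: every block `(i,j)` with `|i-j| ≥ 2` is zero except possibly
blocks in the last block row and last block column. -/
def HasCMLForm {n d : ℕ} (A : Matrix (Fin n × Fin d) (Fin n × Fin d) ℝ) : Prop :=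
  ∀ i j, Far i j → (i : ℕ) ≠ n - 1 → (j : ℕ) ≠ n - 1 → BlockZero A i j

/-- The CM_F form: every block `(i,j)` with `|i-j| ≥ 2` is zero except possibly
blocks in the first block row and first block column. -/
def HasCMFForm {n d : ℕ} (A : Matrix (Fin n × Fin d) (Fin n × Fin d) ℝ) : Prop :=
  ∀ i j, Far i j → (i : ℕ) ≠ 0 → (j : ℕ) ≠ 0 → BlockZero A i j

/-- Cyclic block tri-diagonal: every block `(i,j)` with `|i-j| ≥ 2` is zero except
possibly the corner blocks `(0, n-1)` and `(n-1, 0)`. -/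
def CyclicBlockTriDiag {n d : ℕ} (A : Matrix (Fin n × Fin d) (Fin n × Fin d) ℝ) : Prop :=
  ∀ i j, Far i j → ¬((i : ℕ) = 0 ∧ (j : ℕ) = n - 1) →
    ¬((i : ℕ) = n - 1 ∧ (j : ℕ) = 0) → BlockZero A i j

/-- The stacked block-diagonal matrix with diagonal blocks `G 0, …, G N`. -/
def blockDiag (N d : ℕ) (G : ℕ → Mat d) :
    Matrix (Fin (N + 1) × Fin d) (Fin (N + 1) × Fin d) ℝ :=
  fun p q => if (p.1 : ℕ) = (q.1 : ℕ) then G (p.1 : ℕ) p.2 q.2 else 0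

/-- `[x_k]` obeys the CM_L model with parameters `Gm k = G_{k,k-1}` and
`GN k = G_{k,N}` for `k ∈ [1,N-1]`, boundary parameter `GN 0 = G_{0,N}`, and noise
covariances `Gcov k = G_k = Cov(e_k)`: the `e_k` are zero-mean jointly Gaussian,
mutually uncorrelated, with positive definite covariances, with
`x_k = G_{k,k-1} x_{k-1} + G_{k,N} x_N + e_k` for `k ∈ [1,N-1]`, and boundary
condition `x_N = e_N`, `x_0 = G_{0,N} x_N + e_0`. -/
def CMLModel (N d : ℕ) (μ : Measure Ω) (x : ℕ → Ω → Fin d → ℝ)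
    (Gm GN Gcov : ℕ → Mat d) : Prop :=
  ∃ e : ℕ → Ω → Fin d → ℝ,
    ZMNG N d μ e (blockDiag N d Gcov) ∧
    (∀ k, k ≤ N → (Gcov k).PosDef) ∧
    (∀ᵐ ω ∂μ,
      (∀ k, 1 ≤ k → k ≤ N - 1 →
        x k ω = (Gm k).mulVec (x (k - 1) ω) + (GN k).mulVec (x N ω) + e k ω) ∧
      x N ω = e N ω ∧ x 0 ω = (GN 0).mulVec (x N ω) + e 0 ω)

/-- `[y_k]` obeys the Markov model with parameters `Mm k = M_{k,k-1}` for
`k ∈ [1,N]` and noise covariances `Mcov k = M_k = Cov(e_k)`: the `e_k` are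
zero-mean jointly Gaussian, mutually uncorrelated, with positive definite
covariances, `y_0 = e_0` and `y_k = M_{k,k-1} y_{k-1} + e_k` for `k ∈ [1,N]`. -/
def MarkovModel (N d : ℕ) (μ : Measure Ω) (y : ℕ → Ω → Fin d → ℝ)
    (Mm Mcov : ℕ → Mat d) : Prop :=
  ∃ e : ℕ → Ω → Fin d → ℝ,
    ZMNG N d μ e (blockDiag N d Mcov) ∧
    (∀ k, k ≤ N → (Mcov k).PosDef) ∧
    (∀ᵐ ω ∂μ, y 0 ω = e 0 ω ∧
      ∀ k, 1 ≤ k → k ≤ N → y k ω = (Mm k).mulVec (y (k - 1) ω) + e k ω)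

/-- Representation of `[x_k]` as a zero-mean nonsingular Gaussian Markov sequence
plus `Γ_k x_c`, where `c ∈ {0,N}`: `y` (which coincides with `x` at time `c`) is
jointly zero-mean nonsingular Gaussian, the states of `y` at times `≠ c` are
uncorrelated with `y c = x c`, `y` is Markov on `[0,N] \ {c}`, and
`x_k = y_k + Γ_k x_c` for `k ∈ [0,N] \ {c}`. -/
def MarkovPlusVector (N d c : ℕ) (μ : Measure Ω) (x y : ℕ → Ω → Fin d → ℝ)
    (Γ : ℕ → Mat d) : Prop :=
  ∃ C' : Matrix (Fin (N + 1) × Fin d) (Fin (N + 1) × Fin d) ℝ,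
    (∀ᵐ ω ∂μ, y c ω = x c ω) ∧
    ZMNG N d μ y C' ∧
    (∀ i j : Fin (N + 1),
      (((i : ℕ) = c ∧ (j : ℕ) ≠ c) ∨ ((i : ℕ) ≠ c ∧ (j : ℕ) = c)) →
      ∀ a b, C' (i, a) (j, b) = 0) ∧
    IsMarkovOn μ y (if c = 0 then 1 else 0) (if c = 0 then N else N - 1) ∧
    (∀ᵐ ω ∂μ, ∀ k, k ≤ N → k ≠ c → x k ω = y k ω + (Γ k).mulVec (x c ω))

/-- `M_{N|k} = M_{N,N-1} ⋯ M_{k+1,k}` (with `M_{N|N} = I`), where `Mm k = M_{k,k-1}`. -/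
def MNk (d : ℕ) (Mm : ℕ → Mat d) (N k : ℕ) : Mat d :=
  (List.range (N - k)).foldl (fun A i => A * Mm (N - i)) 1

/-- `C_{N|k} = ∑_{n=k}^{N-1} M_{N|n+1} M_{n+1} M_{N|n+1}'`. -/
def CNk (d : ℕ) (Mm Mcov : ℕ → Mat d) (N k : ℕ) : Mat d :=
  ∑ n ∈ Finset.Icc k (N - 1), MNk d Mm N (n + 1) * Mcov (n + 1) * (MNk d Mm N (n + 1))ᵀ

/-- The `(N+1)d × (N+1)d` matrix `[[B₁, 0], [0, 0]]` (`B₁` occupies the first `N`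
block rows and columns). -/
def embedL (N d : ℕ) (B₁ : Matrix (Fin N × Fin d) (Fin N × Fin d) ℝ) :
    Matrix (Fin (N + 1) × Fin d) (Fin (N + 1) × Fin d) ℝ :=
  fun p q =>
    if h : (p.1 : ℕ) < N ∧ (q.1 : ℕ) < N then
      B₁ (⟨(p.1 : ℕ), h.1⟩, p.2) (⟨(q.1 : ℕ), h.2⟩, q.2)
    else 0

/-- The `(N+1)d × d` matrix `Γ = [S; I]`. -/
def gammaL (N d : ℕ) (S : Matrix (Fin N × Fin d) (Fin d) ℝ) :
    Matrix (Fin (N + 1) × Fin d) (Fin d) ℝ :=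
  fun p a =>
    if h : (p.1 : ℕ) < N then S (⟨(p.1 : ℕ), h⟩, p.2) a
    else (1 : Mat d) p.2 a

/-- The `(N+1)d × (N+1)d` matrix `[[0, 0], [0, B₂]]` (`B₂` occupies the last `N`
block rows and columns). -/
def embedF (N d : ℕ) (B₂ : Matrix (Fin N × Fin d) (Fin N × Fin d) ℝ) :
    Matrix (Fin (N + 1) × Fin d) (Fin (N + 1) × Fin d) ℝ :=
  fun p q =>
    if h : 0 < (p.1 : ℕ) ∧ 0 < (q.1 : ℕ) then
      B₂ (⟨(p.1 : ℕ) - 1, by have := p.1.isLt; omega⟩, p.2)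
        (⟨(q.1 : ℕ) - 1, by have := q.1.isLt; omega⟩, q.2)
    else 0

/-- The `(N+1)d × d` matrix `Γ = [I; S]`. -/
def gammaF (N d : ℕ) (S : Matrix (Fin N × Fin d) (Fin d) ℝ) :
    Matrix (Fin (N + 1) × Fin d) (Fin d) ℝ :=
  fun p a =>
    if h : 0 < (p.1 : ℕ) then
      S (⟨(p.1 : ℕ) - 1, by have := p.1.isLt; omega⟩, p.2) a
    else (1 : Mat d) p.2 a

end CMSeqPaper

/-!
Only the semi-graphoid rules of conditional independence enter: decomposition, weak union,
contraction and symmetry. Each of the properties involved is a family of one-step statements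
`x_m ⫫ (earlier states) | x_{m-1}, x_c`, and contraction chains such a family into a block
statement `x_E ⫫ x_{(r,q]} | x_r, x_c`.

Taking `l = N` in the reciprocal property gives CM_L. Chaining the reciprocal property at
`(m - 1, m, j)` for `k₁ < m < j` gives `x_k ⫫ x_{(k₁,j)} | x_{k₁}, x_j` for `k > j`, which is
`[k₁,N]`-CM_F. Conversely, for `j < k < l < N`, CM_F on `[j,N]` chains to
`x_k ⫫ x_{(l,N]} | x_j, x_l`, CM_L chains to `x_{[0,j]} ⫫ x_{(j,N)} | x_j, x_N`, whence by weak
union `x_k ⫫ x_{[0,j]} | x_j, x_l, x_{(l,N]}`; contracting the two gives reciprocity at `(j,k,l)`.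
-/

namespace MeasurableSpace

open Set

variable {Ω : Type*}

theorem sup_eq_generateFrom_image2_inter (m₁ m₂ : MeasurableSpace Ω) :
    m₁ ⊔ m₂ =
      generateFrom (image2 (· ∩ ·) {s | MeasurableSet[m₁] s} {t | MeasurableSet[m₂] t}) := by
  refine le_antisymm (sup_le (fun s hs => ?_) (fun t ht => ?_)) (generateFrom_le ?_)
  · exact measurableSet_generateFrom ⟨s, hs, univ, MeasurableSet.univ, inter_univ s⟩
  · exact measurableSet_generateFrom ⟨univ, MeasurableSet.univ, t, ht, univ_inter t⟩
  · rintro _ ⟨s, hs, t, ht, rfl⟩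
    exact (le_sup_left (b := m₂) s hs).inter (le_sup_right (a := m₁) t ht)

theorem isPiSystem_image2_inter (m₁ m₂ : MeasurableSpace Ω) :
    IsPiSystem (image2 (· ∩ ·) {s | MeasurableSet[m₁] s} {t | MeasurableSet[m₂] t}) := by
  rintro _ ⟨s, hs, t, ht, rfl⟩ _ ⟨s', hs', t', ht', rfl⟩ -
  exact ⟨s ∩ s', hs.inter hs', t ∩ t', ht.inter ht', (inter_inter_inter_comm s t s' t').symm⟩

end MeasurableSpace

namespace MeasureTheory

variable {Ω : Type*} {m : MeasurableSpace Ω} {mΩ : MeasurableSpace Ω} {μ : Measure Ω}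

theorem setIntegral_eq_of_isPiSystem {P : Set (Set Ω)} (hm : m ≤ mΩ)
    (hgen : m = MeasurableSpace.generateFrom P) (hP : IsPiSystem P) {f g : Ω → ℝ}
    (hf : Integrable f μ) (hg : Integrable g μ) (huniv : ∫ ω, f ω ∂μ = ∫ ω, g ω ∂μ)
    (hbasic : ∀ r ∈ P, ∫ ω in r, f ω ∂μ = ∫ ω in r, g ω ∂μ) {r : Set Ω}
    (hr : MeasurableSet[m] r) : ∫ ω in r, f ω ∂μ = ∫ ω in r, g ω ∂μ := by
  induction r, hr using MeasurableSpace.induction_on_inter hgen hP with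
  | empty => simp
  | basic r hr => exact hbasic r hr
  | compl r hr ih =>
    have hf' := integral_add_compl (hm r hr) hf
    have hg' := integral_add_compl (hm r hr) hg
    linarith
  | iUnion r hdisj hr ih =>
    rw [integral_iUnion (fun i => hm _ (hr i)) hdisj hf.integrableOn,
      integral_iUnion (fun i => hm _ (hr i)) hdisj hg.integrableOn]
    exact tsum_congr ih

end MeasureTheory

namespace ProbabilityTheory

open Set

variable {Ω : Type*} {m m₀ m₁ m₂ m₃ : MeasurableSpace Ω} {mΩ : MeasurableSpace Ω}
  {μ : Measure Ω}

/-- Conditional independence of `m₁` and `m₂` given `m`. Mathlib's `CondIndep` is built on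
`condExpKernel` and needs a standard Borel sample space. -/
def CondIndepCE (μ : Measure Ω) (m₁ m₂ m : MeasurableSpace Ω) : Prop :=
  ∀ s, MeasurableSet[m₁] s → μ⟦s | m₂ ⊔ m⟧ =ᵐ[μ] μ⟦s | m⟧

theorem condIndepCE_of_le (h : m₂ ≤ m) : CondIndepCE μ m₁ m₂ m := fun s _ => by
  rw [sup_eq_right.2 h]

theorem CondIndepCE.mono_left (h : CondIndepCE μ m₁ m₂ m) (h₀ : m₀ ≤ m₁) :
    CondIndepCE μ m₀ m₂ m :=
  fun s hs => h s (h₀ s hs)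

theorem CondIndepCE.sup_right (h₂ : CondIndepCE μ m₁ m₂ m)
    (h₃ : CondIndepCE μ m₁ m₃ (m₂ ⊔ m)) : CondIndepCE μ m₁ (m₂ ⊔ m₃) m := fun s hs => by
  rw [sup_comm m₂, sup_assoc]
  exact (h₃ s hs).trans (h₂ s hs)

variable [IsFiniteMeasure μ]

theorem condIndepCE_of_le_left (h : m₁ ≤ m) (hm₂ : m₂ ≤ mΩ) (hm : m ≤ mΩ) :
    CondIndepCE μ m₁ m₂ m := fun s hs => by
  have hs' : MeasurableSet[m] s := h s hs
  have hind : Integrable (s.indicator fun _ => (1 : ℝ)) μ :=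
    (integrable_const 1).indicator (hm s hs')
  rw [condExp_of_stronglyMeasurable hm (stronglyMeasurable_const.indicator hs') hind,
    condExp_of_stronglyMeasurable (sup_le hm₂ hm)
      (stronglyMeasurable_const.indicator (le_sup_right (a := m₂) s hs')) hind]

theorem CondIndepCE.mono_right (h : CondIndepCE μ m₁ m₂ m) (h₃ : m₃ ≤ m₂) (hm₂ : m₂ ≤ mΩ)
    (hm : m ≤ mΩ) : CondIndepCE μ m₁ m₃ m := fun s hs => by
  have h₃m : m₃ ⊔ m ≤ m₂ ⊔ m := sup_le_sup_right h₃ m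
  calc μ⟦s | m₃ ⊔ m⟧
      =ᵐ[μ] μ[μ⟦s | m₂ ⊔ m⟧ | m₃ ⊔ m] := (condExp_condExp_of_le h₃m (sup_le hm₂ hm)).symm
    _ =ᵐ[μ] μ[μ⟦s | m⟧ | m₃ ⊔ m] := condExp_congr_ae (h s hs)
    _ = μ⟦s | m⟧ := condExp_of_stronglyMeasurable (h₃m.trans (sup_le hm₂ hm))
        (stronglyMeasurable_condExp.mono le_sup_right) integrable_condExp

theorem CondIndepCE.weakUnion (h : CondIndepCE μ m₁ (m₂ ⊔ m₃) m) (hm₂ : m₂ ≤ mΩ)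
    (hm₃ : m₃ ≤ mΩ) (hm : m ≤ mΩ) : CondIndepCE μ m₁ m₂ (m₃ ⊔ m) := fun s hs => by
  rw [← sup_assoc]
  exact (h s hs).trans ((h.mono_right le_sup_right (sup_le hm₂ hm₃) hm) s hs).symm

theorem CondIndepCE.condExp_indicator_inter (h : CondIndepCE μ m₁ m₂ m) (hm₁ : m₁ ≤ mΩ)
    (hm₂ : m₂ ≤ mΩ) (hm : m ≤ mΩ) {s t : Set Ω} (hs : MeasurableSet[m₁] s)
    (ht : MeasurableSet[m₂] t) : μ⟦s ∩ t | m⟧ =ᵐ[μ] μ⟦s | m⟧ * μ⟦t | m⟧ := by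
  have ht' : MeasurableSet[m₂ ⊔ m] t := le_sup_left (a := m₂) t ht
  have hs1 : Integrable (s.indicator fun _ => (1 : ℝ)) μ :=
    (integrable_const 1).indicator (hm₁ s hs)
  have hmul : t.indicator (μ⟦s | m⟧) = μ⟦s | m⟧ * t.indicator fun _ => 1 := by
    ext ω; by_cases hω : ω ∈ t <;> simp [hω]
  calc μ⟦s ∩ t | m⟧
      = μ[t.indicator (s.indicator fun _ => 1) | m] := by
        rw [indicator_indicator, inter_comm]
    _ =ᵐ[μ] μ[μ[t.indicator (s.indicator fun _ => 1) | m₂ ⊔ m] | m] :=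
        (condExp_condExp_of_le le_sup_right (sup_le hm₂ hm)).symm
    _ =ᵐ[μ] μ[t.indicator (μ⟦s | m₂ ⊔ m⟧) | m] := condExp_congr_ae (condExp_indicator hs1 ht')
    _ =ᵐ[μ] μ[t.indicator (μ⟦s | m⟧) | m] := condExp_congr_ae (h s hs).indicator
    _ =ᵐ[μ] μ⟦s | m⟧ * μ⟦t | m⟧ := by
        rw [hmul]
        refine condExp_mul_of_stronglyMeasurable_left stronglyMeasurable_condExp ?_
          ((integrable_const 1).indicator (hm₂ t ht))
        rw [← hmul]
        exact integrable_condExp.indicator (hm₂ t ht)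

theorem condIndepCE_of_condExp_indicator_inter (hm₁ : m₁ ≤ mΩ) (hm₂ : m₂ ≤ mΩ) (hm : m ≤ mΩ)
    (h : ∀ s t, MeasurableSet[m₁] s → MeasurableSet[m₂] t →
      μ⟦s ∩ t | m⟧ =ᵐ[μ] μ⟦s | m⟧ * μ⟦t | m⟧) :
    CondIndepCE μ m₂ m₁ m := by
  intro t ht
  have ht₀ : MeasurableSet t := hm₂ t ht
  have hti : Integrable (t.indicator fun _ => (1 : ℝ)) μ := (integrable_const 1).indicator ht₀
  set g := μ⟦t | m⟧
  have hbasic : ∀ r ∈ image2 (· ∩ ·) {s | MeasurableSet[m₁] s} {u | MeasurableSet[m] u},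
      ∫ ω in r, g ω ∂μ = ∫ ω in r, t.indicator (fun _ => (1 : ℝ)) ω ∂μ := by
    rintro _ ⟨s, hs, u, hu, rfl⟩
    have hs₀ : MeasurableSet s := hm₁ s hs
    have hsg : s.indicator g = g * s.indicator fun _ => 1 := by
      ext ω; by_cases hω : ω ∈ s <;> simp [hω]
    have hsgi : Integrable (s.indicator g) μ := integrable_condExp.indicator hs₀
    calc ∫ ω in s ∩ u, g ω ∂μ
        = ∫ ω in u, s.indicator g ω ∂μ := by rw [setIntegral_indicator hs₀, inter_comm]
      _ = ∫ ω in u, μ[s.indicator g | m] ω ∂μ := (setIntegral_condExp hm hsgi hu).symm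
      _ = ∫ ω in u, (μ⟦s | m⟧ * g) ω ∂μ := by
          refine setIntegral_congr_ae (hm u hu) ?_
          rw [hsg]
          filter_upwards [condExp_mul_of_stronglyMeasurable_left stronglyMeasurable_condExp
            (hsg ▸ hsgi) ((integrable_const 1).indicator hs₀)] with ω hω _
          rw [hω, Pi.mul_apply, Pi.mul_apply, mul_comm]
      _ = ∫ ω in u, (μ⟦s ∩ t | m⟧) ω ∂μ :=
          setIntegral_congr_ae (hm u hu) ((h s t hs ht).mono fun ω hω _ => hω.symm)
      _ = ∫ ω in u, (s ∩ t).indicator (fun _ => (1 : ℝ)) ω ∂μ :=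
          setIntegral_condExp hm ((integrable_const 1).indicator (hs₀.inter ht₀)) hu
      _ = ∫ ω in s ∩ u, t.indicator (fun _ => (1 : ℝ)) ω ∂μ := by
          rw [setIntegral_indicator (hs₀.inter ht₀), setIntegral_indicator ht₀, inter_comm u,
            inter_right_comm s u t]
  refine (ae_eq_condExp_of_forall_setIntegral_eq (sup_le hm₁ hm) hti
    (fun _ _ _ => integrable_condExp.integrableOn) (fun r hr _ => ?_)
    (stronglyMeasurable_condExp.mono (le_sup_right : m ≤ m₁ ⊔ m)).aestronglyMeasurable).symm
  exact setIntegral_eq_of_isPiSystem (sup_le hm₁ hm)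
    (MeasurableSpace.sup_eq_generateFrom_image2_inter m₁ m)
    (MeasurableSpace.isPiSystem_image2_inter m₁ m) integrable_condExp hti (integral_condExp hm)
    hbasic hr

theorem CondIndepCE.symm (h : CondIndepCE μ m₁ m₂ m) (hm₁ : m₁ ≤ mΩ) (hm₂ : m₂ ≤ mΩ)
    (hm : m ≤ mΩ) : CondIndepCE μ m₂ m₁ m :=
  condIndepCE_of_condExp_indicator_inter hm₁ hm₂ hm
    fun _ _ hs ht => h.condExp_indicator_inter hm₁ hm₂ hm hs ht

end ProbabilityTheory

namespace CMSeqPaper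

open Set

section Sequence

variable {Ω : Type*} {mΩ : MeasurableSpace Ω} {μ : Measure Ω} {d : ℕ}
  {x x' : ℕ → Ω → Fin d → ℝ}

theorem sigmaOf_union (S T : Set ℕ) : sigmaOf x (S ∪ T) = sigmaOf x S ⊔ sigmaOf x T :=
  iSup_union

theorem sigmaOf_mono {S T : Set ℕ} (h : S ⊆ T) : sigmaOf x S ≤ sigmaOf x T :=
  biSup_mono h

theorem sigmaOf_le (hx : ∀ k, Measurable (x k)) (S : Set ℕ) : sigmaOf x S ≤ mΩ :=
  iSup₂_le fun k _ => (hx k).comap_le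

theorem sigmaOf_congr {S : Set ℕ} (h : ∀ k ∈ S, x k = x' k) : sigmaOf x S = sigmaOf x' S :=
  biSup_congr fun k hk => by rw [h k hk]

theorem measurableSet_sigmaOf_singleton {k : ℕ} {s : Set Ω} :
    MeasurableSet[sigmaOf x {k}] s ↔ ∃ A, MeasurableSet A ∧ x k ⁻¹' A = s := by
  rw [sigmaOf, iSup_singleton]
  exact MeasurableSpace.measurableSet_comap

theorem condEq_congr {k : ℕ} {S T : Set ℕ} (hS : ∀ i ∈ S, x i = x' i) (hT : ∀ i ∈ T, x i = x' i)
    (hk : x k = x' k) : CondEq μ x k S T ↔ CondEq μ x' k S T := by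
  rw [CondEq, CondEq, sigmaOf_congr hS, sigmaOf_congr hT, hk]

theorem condEq_iff_condIndepCE {k : ℕ} {S T U : Set ℕ} (hU : S ∪ T = U) :
    CondEq μ x k U T ↔ CondIndepCE μ (sigmaOf x {k}) (sigmaOf x S) (sigmaOf x T) := by
  have hind : ∀ A : Set (Fin d → ℝ),
      A.indicator (fun _ => (1 : ℝ)) ∘ x k = (x k ⁻¹' A).indicator fun _ => 1 :=
    fun A => funext fun ω => (indicator_comp_right (x k)).symm
  subst hU
  rw [CondEq, CondIndepCE, sigmaOf_union]
  constructor
  · intro h s hs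
    obtain ⟨A, hA, rfl⟩ := measurableSet_sigmaOf_singleton.1 hs
    simpa only [hind] using h A hA
  · intro h A hA
    simpa only [hind] using h _ (measurableSet_sigmaOf_singleton.2 ⟨A, hA, rfl⟩)

theorem isReciprocal_congr {N : ℕ} (h : ∀ k ≤ N, x k = x' k) :
    IsReciprocal μ x N ↔ IsReciprocal μ x' N :=
  forall₃_congr fun j k l => imp_congr_right fun hjk => imp_congr_right fun hkl =>
    imp_congr_right fun hlN => condEq_congr (fun i hi => h i (by simp at hi; omega))
      (fun i hi => h i (by simp at hi; omega)) (h k (by omega))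

theorem isCM_congr {k₁ k₂ c : ℕ} (h : ∀ k ≤ k₂, x k = x' k) (hc : c = k₁ ∨ c = k₂) :
    IsCM μ x k₁ k₂ c ↔ IsCM μ x' k₁ k₂ c :=
  forall₂_congr fun j k => imp_congr_right fun hk₁j => imp_congr_right fun hjk =>
    imp_congr_right fun hkk₂ => condEq_congr (fun i hi => h i (by simp at hi; omega))
      (fun i hi => h i (by simp at hi; omega)) (h k hkk₂)

variable [IsFiniteMeasure μ]

theorem condIndepCE_sigmaOf_Icc_of_step (hx : ∀ k, Measurable (x k)) {E : Set ℕ} {r c : ℕ} :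
    ∀ q, (∀ m, r < m → m ≤ q → CondIndepCE μ (sigmaOf x {m})
        (sigmaOf x (E ∪ Icc r (m - 1))) (sigmaOf x ({m - 1} ∪ {c}))) →
      CondIndepCE μ (sigmaOf x E) (sigmaOf x (Icc (r + 1) q)) (sigmaOf x ({c} ∪ {r}))
  | 0, _ => condIndepCE_of_le (sigmaOf_mono fun n hn => by simp at hn)
  | q + 1, h => by
    obtain hqr | hrq := lt_or_ge q r
    · exact condIndepCE_of_le (sigmaOf_mono fun n hn => by simp at hn; omega)
    have hσ := sigmaOf_le (mΩ := mΩ) hx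
    have hlast := h (q + 1) (by omega) le_rfl
    rw [Nat.add_sub_cancel, sigmaOf_union] at hlast
    have hlast' := hlast.weakUnion (hσ _) (hσ _) (hσ _)
    rw [← sigmaOf_union, show Icc r q ∪ ({q} ∪ {c}) = Icc (r + 1) q ∪ ({c} ∪ {r}) by
      ext n; simp; omega, sigmaOf_union] at hlast'
    have hpre := condIndepCE_sigmaOf_Icc_of_step hx q fun m hm hmq => h m hm (by omega)
    have := hpre.sup_right (hlast'.symm (hσ _) (hσ _) (sup_le (hσ _) (hσ _)))
    rwa [← sigmaOf_union, show Icc (r + 1) q ∪ {q + 1} = Icc (r + 1) (q + 1) by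
      ext n; simp; omega] at this

variable {N : ℕ}

theorem condIndepCE_of_isReciprocal (hx : ∀ k, Measurable (x k)) (hR : IsReciprocal μ x N)
    {k₁ j : ℕ} (hk₁j : k₁ < j) (hjN : j ≤ N) :
    CondIndepCE μ (sigmaOf x (Icc 0 k₁ ∪ Icc j N)) (sigmaOf x (Icc (k₁ + 1) (j - 1)))
      (sigmaOf x ({j} ∪ {k₁})) :=
  condIndepCE_sigmaOf_Icc_of_step hx (j - 1) fun m hm hmj =>
    (condEq_iff_condIndepCE (by ext n; simp; omega)).1 (hR (m - 1) m j (by omega) (by omega) hjN)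

theorem isCM_first_of_isReciprocal (hx : ∀ k, Measurable (x k)) (hR : IsReciprocal μ x N)
    (k₁ : ℕ) : IsCM μ x k₁ N k₁ := by
  intro j k hk₁j hjk hkN
  obtain hj | hj := le_or_gt j (k₁ + 1)
  · rw [show Icc k₁ j ∪ {k₁} = {j} ∪ {k₁} by ext n; simp; omega]
    exact fun _ _ => ae_eq_refl _
  · refine (condEq_iff_condIndepCE (S := Icc (k₁ + 1) (j - 1)) (by ext n; simp; omega)).2 ?_
    exact (condIndepCE_of_isReciprocal hx hR (by omega) (by omega)).mono_left
      (sigmaOf_mono (singleton_subset_iff.2 (by simp; omega)))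

theorem isCM_last_of_isReciprocal (hx : ∀ k, Measurable (x k)) (hR : IsReciprocal μ x N) :
    IsCM μ x 0 N N := by
  intro j k _ hjk hkN
  obtain rfl | hkN := eq_or_lt_of_le hkN
  · exact (condEq_iff_condIndepCE (S := Icc 0 j) (by ext n; simp)).2
      (condIndepCE_of_le_left (sigmaOf_mono (by simp)) (sigmaOf_le hx _) (sigmaOf_le hx _))
  · simpa only [Icc_self] using hR j k N hjk hkN le_rfl

theorem condIndepCE_future_of_isCM_first (hx : ∀ k, Measurable (x k)) {j l : ℕ}
    (hF : IsCM μ x j N j) (hjl : j ≤ l) :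
    CondIndepCE μ (sigmaOf x (Icc j l)) (sigmaOf x (Icc (l + 1) N)) (sigmaOf x ({j} ∪ {l})) :=
  condIndepCE_sigmaOf_Icc_of_step hx N fun m hm hmN =>
    (condEq_iff_condIndepCE (by ext n; simp; omega)).1 (hF (m - 1) m (by omega) (by omega) hmN)

theorem condIndepCE_past_of_isCM_last (hx : ∀ k, Measurable (x k)) (hL : IsCM μ x 0 N N)
    (j : ℕ) :
    CondIndepCE μ (sigmaOf x (Icc 0 j)) (sigmaOf x (Icc (j + 1) (N - 1)))
      (sigmaOf x ({N} ∪ {j})) :=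
  condIndepCE_sigmaOf_Icc_of_step hx (N - 1) fun m hm hmN =>
    (condEq_iff_condIndepCE (by ext n; simp; omega)).1
      (hL (m - 1) m (Nat.zero_le _) (by omega) (by omega))

theorem isReciprocal_of_isCM (hx : ∀ k, Measurable (x k)) (hF : ∀ k₁ ≤ N, IsCM μ x k₁ N k₁)
    (hL : IsCM μ x 0 N N) : IsReciprocal μ x N := by
  intro j k l hjk hkl hlN
  obtain rfl | hlN := eq_or_lt_of_le hlN
  · simpa only [Icc_self] using hL j k (Nat.zero_le j) hjk hkl.le
  have hσ := sigmaOf_le (mΩ := mΩ) hx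
  have hfuture := (condIndepCE_future_of_isCM_first hx (hF j (by omega))
    (hjk.trans hkl).le).mono_left (sigmaOf_mono (singleton_subset_iff.2 ⟨hjk.le, hkl.le⟩))
  have hpast := (condIndepCE_past_of_isCM_last hx hL j).mono_right
    (m₃ := sigmaOf x ({k} ∪ Icc l (N - 1))) (sigmaOf_mono (by intro n; simp; omega)) (hσ _) (hσ _)
  rw [sigmaOf_union] at hpast
  have hpast' := hpast.weakUnion (hσ _) (hσ _) (hσ _)
  rw [← sigmaOf_union, show Icc l (N - 1) ∪ ({N} ∪ {j}) = Icc (l + 1) N ∪ ({j} ∪ {l}) by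
    ext n; simp; omega, sigmaOf_union] at hpast'
  have := hfuture.sup_right (hpast'.symm (hσ _) (hσ _) (sup_le (hσ _) (hσ _)))
  rw [← sigmaOf_union] at this
  exact (condEq_iff_condIndepCE (by ext n; simp; omega)).2 this

theorem isReciprocal_iff_isCM (hx : ∀ k, Measurable (x k)) :
    IsReciprocal μ x N ↔ (∀ k₁, k₁ ≤ N → IsCM μ x k₁ N k₁) ∧ IsCM μ x 0 N N :=
  ⟨fun hR => ⟨fun k₁ _ => isCM_first_of_isReciprocal hx hR k₁, isCM_last_of_isReciprocal hx hR⟩,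
    fun h => isReciprocal_of_isCM hx h.1 h.2⟩

end Sequence

variable {Ω : Type*} [MeasurableSpace Ω]

theorem stmt0_general {N d : ℕ}
    (μ : Measure Ω) [IsProbabilityMeasure μ] (x : ℕ → Ω → Fin d → ℝ)
    (C : Matrix (Fin (N + 1) × Fin d) (Fin (N + 1) × Fin d) ℝ)
    (hx : ZMNG N d μ x C) :
    IsReciprocal μ x N ↔
      ((∀ k₁, k₁ ≤ N → IsCM μ x k₁ N k₁) ∧ IsCM μ x 0 N N) := by
  -- only `x 0, …, x N` enter the statement, and `k ↦ x (min k N)` is measurable at every time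
  have hagree : ∀ k ≤ N, x k = x (min k N) := fun k hk => by rw [min_eq_left hk]
  simp only [isReciprocal_congr hagree, isCM_congr hagree (Or.inl rfl),
    isCM_congr hagree (Or.inr rfl)]
  exact isReciprocal_iff_isCM fun k => hx.1 _ (min_le_right k N)

/-- A zero-mean nonsingular Gaussian sequence `[x_k]`, `k ∈ [0,N]`,
is reciprocal iff it is `[k₁,N]`-CM_F for every `k₁ ∈ [0,N]` and it is CM_L. -/
theorem stmt0 {N d : ℕ} (hN : 3 ≤ N) (hd : 1 ≤ d)
    (μ : Measure Ω) [IsProbabilityMeasure μ] (x : ℕ → Ω → Fin d → ℝ)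
    (C : Matrix (Fin (N + 1) × Fin d) (Fin (N + 1) × Fin d) ℝ)
    (hx : ZMNG N d μ x C) :
    IsReciprocal μ x N ↔
      ((∀ k₁, k₁ ≤ N → IsCM μ x k₁ N k₁) ∧ IsCM μ x 0 N N) :=
  stmt0_general μ x C hx

end CMSeqPaper
end

section
/- Let M_{k,k−1}, k ∈ [1,N], be real d×d matrices and M_k, k ∈ [1,N], be real d×d positive definite matrices. Define M_{N|k} = M_{N,N−1} ⋯ M_{k+1,k} for k ∈ [0,N−1] with M_{N|N} = I, and C_{N|k} = Σ_{n=k}^{N−1} M_{N|n+1} M_{n+1} M_{N|n+1}' for k ∈ [1,N−1] (each C_{N|k} is positive definite since its n = N−1 summand is M_N). Define G_k = (M_k⁻¹ + M_{N|k}' C_{N|k}⁻¹ M_{N|k})⁻¹, G_{k,N} = G_k M_{N|k}' C_{N|k}⁻¹, and G_{k,k−1} = M_{k,k−1} − G_{k,N} M_{N|k} M_{k,k−1} for k ∈ [1,N−1]. Then for every k ∈ [1,N−2], G_k⁻¹ G_{k,N} = G_{k+1,k}' G_{k+1}⁻¹ G_{k+1,N}. -/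
/-!
Unfolding the definitions, `G_k⁻¹ G_{k,N} = M_{N|k}' C_{N|k}⁻¹`. Peeling off one step,
`M_{N|k} = M_{N|k+1} M_{k+1,k}` and `C_{N|k} = M_{N|k+1} M_{k+1} M_{N|k+1}' + C_{N|k+1}`,
and the Woodbury identity
`C_{N|k}⁻¹ = C_{N|k+1}⁻¹ - C_{N|k+1}⁻¹ M_{N|k+1} G_{k+1} M_{N|k+1}' C_{N|k+1}⁻¹`
turns `M_{N|k}' C_{N|k}⁻¹` into `G_{k+1,k}' M_{N|k+1}' C_{N|k+1}⁻¹ = G_{k+1,k}' G_{k+1}⁻¹ G_{k+1,N}`.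
-/


open MeasureTheory ProbabilityTheory Matrix
open scoped NNReal

namespace CMSeqPaper

variable {Ω : Type*} [MeasurableSpace Ω]

section Woodbury

variable {R : Type*} [CommRing R] {m n p : Type*} [Fintype m] [DecidableEq m]
  [Fintype n] [DecidableEq n]

theorem transpose_mul_inv_add_mul_mul_transpose {B : Matrix m n R} {M G : Matrix n n R}
    {D : Matrix m m R} (F : Matrix n p R) (hM : M.IsSymm) (hD : D.IsSymm)
    (hMu : IsUnit M) (hDu : IsUnit D) (hK : IsUnit (M⁻¹ + Bᵀ * D⁻¹ * B))
    (hG : G = (M⁻¹ + Bᵀ * D⁻¹ * B)⁻¹) :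
    (B * F)ᵀ * (B * M * Bᵀ + D)⁻¹ =
      (F - G * Bᵀ * D⁻¹ * B * F)ᵀ * G⁻¹ * (G * Bᵀ * D⁻¹) := by
  have hGsymm : Gᵀ = G := by
    rw [hG, transpose_nonsing_inv, transpose_add, transpose_nonsing_inv, hM.eq,
      transpose_mul, transpose_mul, transpose_nonsing_inv, hD.eq, transpose_transpose,
      Matrix.mul_assoc]
  have hGG : G⁻¹ * G = 1 := by
    rw [hG, nonsing_inv_nonsing_inv _ ((isUnit_iff_isUnit_det _).mp hK)]
    exact mul_nonsing_inv _ ((isUnit_iff_isUnit_det _).mp hK)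
  have hwoodbury : (B * M * Bᵀ + D)⁻¹ = D⁻¹ - D⁻¹ * B * G * Bᵀ * D⁻¹ := by
    rw [add_comm, add_mul_mul_inv_eq_sub D B M Bᵀ hDu hMu hK, ← hG]
  have hcancel : ∀ X : Matrix p n R, X * G⁻¹ * (G * Bᵀ * D⁻¹) = X * Bᵀ * D⁻¹ := fun X => by
    rw [Matrix.mul_assoc X, ← Matrix.mul_assoc G⁻¹, ← Matrix.mul_assoc G⁻¹, hGG,
      Matrix.one_mul, Matrix.mul_assoc X]
  rw [hcancel, hwoodbury]
  simp only [transpose_sub, transpose_mul, hGsymm, transpose_nonsing_inv, hD.eq,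
    transpose_transpose, Matrix.mul_sub, Matrix.sub_mul, Matrix.mul_assoc]

end Woodbury

theorem posDef_inv_add_transpose_mul_inv_mul {m n : Type*} [Fintype m] [DecidableEq m]
    [Fintype n] [DecidableEq n] {M : Matrix n n ℝ} {D : Matrix m m ℝ} (hM : M.PosDef)
    (hD : D.PosDef) (B : Matrix m n ℝ) : (M⁻¹ + Bᵀ * D⁻¹ * B).PosDef :=
  hM.inv.add_posSemidef (by simpa using hD.inv.posSemidef.conjTranspose_mul_mul_same B)

section MarkovProducts

variable {d : ℕ} (Mm Mcov : ℕ → Mat d) {N : ℕ}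

theorem MNk_self : MNk d Mm N N = 1 := by
  simp [MNk]

theorem MNk_eq_MNk_succ_mul {k : ℕ} (h : k < N) :
    MNk d Mm N k = MNk d Mm N (k + 1) * Mm (k + 1) := by
  unfold MNk
  rw [show N - k = N - (k + 1) + 1 by omega, List.range_succ, List.foldl_append,
    List.foldl_cons, List.foldl_nil, show N - (N - (k + 1)) = k + 1 by omega]

theorem CNk_eq_add_CNk_succ {k : ℕ} (h : k + 1 < N) :
    CNk d Mm Mcov N k =
      MNk d Mm N (k + 1) * Mcov (k + 1) * (MNk d Mm N (k + 1))ᵀ + CNk d Mm Mcov N (k + 1) := by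
  unfold CNk
  rw [← Finset.insert_Icc_add_one_left_eq_Icc (by omega), Finset.sum_insert (by simp)]

theorem CNk_posDef (hM : ∀ k, 1 ≤ k → k ≤ N → (Mcov k).PosDef) {k : ℕ} (h : k < N) :
    (CNk d Mm Mcov N k).PosDef := by
  unfold CNk
  rw [← Finset.Ico_insert_right (by omega : k ≤ N - 1),
    Finset.sum_insert (by simp), Nat.sub_add_cancel (by omega), MNk_self]
  simp only [Matrix.one_mul, transpose_one, Matrix.mul_one]
  refine (hM N (by omega) le_rfl).add_posSemidef (posSemidef_sum _ fun n hn => ?_)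
  have hn := Finset.mem_Ico.mp hn
  simpa using (hM (n + 1) (by omega) (by omega)).posSemidef.mul_mul_conjTranspose_same _

end MarkovProducts

theorem stmt11_general {N d : ℕ}
    (Mm Mcov : ℕ → Mat d) (hM : ∀ k, 1 ≤ k → k ≤ N → (Mcov k).PosDef)
    (Gm GN Gcov : ℕ → Mat d)
    (hGcov : ∀ k, 1 ≤ k → k ≤ N - 1 →
      Gcov k = ((Mcov k)⁻¹ +
        (MNk d Mm N k)ᵀ * (CNk d Mm Mcov N k)⁻¹ * MNk d Mm N k)⁻¹)
    (hGN : ∀ k, 1 ≤ k → k ≤ N - 1 →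
      GN k = Gcov k * (MNk d Mm N k)ᵀ * (CNk d Mm Mcov N k)⁻¹)
    (hGm : ∀ k, 1 ≤ k → k ≤ N - 1 →
      Gm k = Mm k - GN k * MNk d Mm N k * Mm k) :
    ∀ k, 1 ≤ k → k ≤ N - 2 →
      (Gcov k)⁻¹ * GN k = (Gm (k + 1))ᵀ * (Gcov (k + 1))⁻¹ * GN (k + 1) := by
  intro k hk₁ hk₂
  have hMk := hM k hk₁ (by omega)
  have hMk₁ := hM (k + 1) (by omega) (by omega)
  have hCk₁ := CNk_posDef Mm Mcov hM (k := k + 1) (by omega)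
  have hGk : (Gcov k).PosDef := hGcov k hk₁ (by omega) ▸
    (posDef_inv_add_transpose_mul_inv_mul hMk (CNk_posDef Mm Mcov hM (by omega)) _).inv
  calc (Gcov k)⁻¹ * GN k = (MNk d Mm N k)ᵀ * (CNk d Mm Mcov N k)⁻¹ := by
        rw [hGN k hk₁ (by omega), Matrix.mul_assoc,
          nonsing_inv_mul_cancel_left _ _ ((isUnit_iff_isUnit_det _).mp hGk.isUnit)]
    _ = (MNk d Mm N (k + 1) * Mm (k + 1))ᵀ * (MNk d Mm N (k + 1) * Mcov (k + 1) *
          (MNk d Mm N (k + 1))ᵀ + CNk d Mm Mcov N (k + 1))⁻¹ := by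
        rw [MNk_eq_MNk_succ_mul Mm (by omega), CNk_eq_add_CNk_succ Mm Mcov (by omega)]
    _ = (Gm (k + 1))ᵀ * (Gcov (k + 1))⁻¹ * GN (k + 1) := by
        rw [hGm (k + 1) (by omega) (by omega), hGN (k + 1) (by omega) (by omega)]
        exact transpose_mul_inv_add_mul_mul_transpose _
          (isHermitian_iff_isSymm.mp hMk₁.isHermitian) (isHermitian_iff_isSymm.mp hCk₁.isHermitian)
          hMk₁.isUnit hCk₁.isUnit (posDef_inv_add_transpose_mul_inv_mul hMk₁ hCk₁ _).isUnit
          (hGcov (k + 1) (by omega) (by omega))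

/-- The parameters `(G_{k,k-1}, G_{k,N}, G_k)` obtained from a
Markov model `(M_{k,k-1}, M_k)` via the Markov-induced formulas satisfy the
reciprocity condition `G_k⁻¹ G_{k,N} = G_{k+1,k}' G_{k+1}⁻¹ G_{k+1,N}` for all
`k ∈ [1,N-2]`. -/
theorem stmt11 {N d : ℕ} (hN : 3 ≤ N) (hd : 1 ≤ d)
    (Mm Mcov : ℕ → Mat d) (hM : ∀ k, 1 ≤ k → k ≤ N → (Mcov k).PosDef)
    (Gm GN Gcov : ℕ → Mat d)
    (hGcov : ∀ k, 1 ≤ k → k ≤ N - 1 →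
      Gcov k = ((Mcov k)⁻¹ +
        (MNk d Mm N k)ᵀ * (CNk d Mm Mcov N k)⁻¹ * MNk d Mm N k)⁻¹)
    (hGN : ∀ k, 1 ≤ k → k ≤ N - 1 →
      GN k = Gcov k * (MNk d Mm N k)ᵀ * (CNk d Mm Mcov N k)⁻¹)
    (hGm : ∀ k, 1 ≤ k → k ≤ N - 1 →
      Gm k = Mm k - GN k * MNk d Mm N k * Mm k) :
    ∀ k, 1 ≤ k → k ≤ N - 2 →
      (Gcov k)⁻¹ * GN k = (Gm (k + 1))ᵀ * (Gcov (k + 1))⁻¹ * GN (k + 1) :=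
  stmt11_general Mm Mcov hM Gm GN Gcov hGcov hGN hGm

end CMSeqPaper
end

section
/- Let C be an (N+1)d×(N+1)d symmetric positive definite matrix viewed as (N+1)×(N+1) blocks of size d×d. (i) C⁻¹ has the CM_L form if and only if C = B + Γ D Γ' where D is a d×d positive definite matrix, B = [[B_1, 0],[0, 0]] with B_1 an Nd×Nd positive definite matrix whose inverse is block tri-diagonal, and Γ = [S; I] with S an arbitrary Nd×d matrix and I the d×d identity. (ii) C⁻¹ has the CM_F form if and only if C = B + Γ D Γ' where D is d×d positive definite, B = [[0, 0],[0, B_1]] with B_1 an Nd×Nd positive definite matrix whose inverse is block tri-diagonal, and Γ = [I; S] with S an Nd×d matrix. -/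
open MeasureTheory ProbabilityTheory Matrix
open scoped NNReal

namespace CMSeqPaper

variable {Ω : Type*} [MeasurableSpace Ω]

section Aux15

variable {m n κ : Type*} [Fintype m] [Fintype n] [Fintype κ]
  [DecidableEq m] [DecidableEq n] [DecidableEq κ]

lemma conjT_eq (b : Matrix m n ℝ) : bᴴ = bᵀ := by
  ext i j; simp [Matrix.conjTranspose_apply]

lemma posDef_submatrix_equiv {M : Matrix κ κ ℝ} (hM : M.PosDef) (e : m ≃ κ) :
    (M.submatrix e e).PosDef := by
  refine Matrix.posDef_iff_dotProduct_mulVec.mpr ⟨(Matrix.isHermitian_submatrix_equiv e).mpr hM.1, fun x hx => ?_⟩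
  have hx' : x ∘ e.symm ≠ 0 := by
    intro h
    apply hx
    funext i
    simpa using congrFun h (e i)
  have h0 := hM.dotProduct_mulVec_pos hx'
  rw [Matrix.submatrix_mulVec_equiv]
  have key : star x ⬝ᵥ ((M *ᵥ (x ∘ e.symm)) ∘ e)
      = star (x ∘ e.symm) ⬝ᵥ (M *ᵥ (x ∘ e.symm)) := by
    rw [show star (x ∘ e.symm) = star x ∘ e.symm from rfl]
    exact (comp_equiv_symm_dotProduct (star x) (M *ᵥ (x ∘ e.symm)) e).symm
  rw [key]
  exact h0

lemma posDef_schur {A : Matrix m m ℝ} {B : Matrix m n ℝ} {D : Matrix n n ℝ}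
    (hA : A.PosDef) (h : (Matrix.fromBlocks A B Bᴴ D).PosDef) :
    (D - Bᴴ * A⁻¹ * B).PosDef := by
  haveI := hA.isUnit.invertible
  refine Matrix.posDef_iff_dotProduct_mulVec.mpr ⟨(Matrix.IsHermitian.fromBlocks₁₁ B D hA.1).mp h.1, fun y hy => ?_⟩
  have hxy : Sum.elim (-((A⁻¹ * B) *ᵥ y)) y ≠ 0 := by
    intro hz
    exact hy (funext fun i => by simpa using congrFun hz (Sum.inr i))
  have h0 := h.dotProduct_mulVec_pos hxy
  rw [Matrix.dotProduct_mulVec, Matrix.schur_complement_eq₁₁ B D _ _ hA.1,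
    neg_add_cancel] at h0
  simp only [star_zero, Matrix.zero_vecMul, zero_dotProduct, zero_add] at h0
  rwa [Matrix.dotProduct_mulVec]

lemma mul_eq_one_blocks {B₁ : Matrix m m ℝ} {S : Matrix m n ℝ} {D : Matrix n n ℝ}
    (hB : IsUnit B₁.det) (hD : IsUnit D.det) :
    Matrix.fromBlocks (B₁ + S * D * Sᵀ) (S * D) (D * Sᵀ) D *
      Matrix.fromBlocks B₁⁻¹ (-(B₁⁻¹ * S)) (-(Sᵀ * B₁⁻¹)) (D⁻¹ + Sᵀ * B₁⁻¹ * S) = 1 := by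
  have h1 : B₁ * B₁⁻¹ = 1 := Matrix.mul_nonsing_inv _ hB
  have h2 : D * D⁻¹ = 1 := Matrix.mul_nonsing_inv _ hD
  have c1 : B₁ * (B₁⁻¹ * S) = S := Matrix.mul_nonsing_inv_cancel_left B₁ S hB
  rw [Matrix.fromBlocks_multiply, ← Matrix.fromBlocks_one]
  refine Matrix.fromBlocks_inj.mpr ⟨?_, ?_, ?_, ?_⟩
  · simp only [Matrix.mul_add, Matrix.add_mul, Matrix.mul_neg, Matrix.neg_mul,
      Matrix.mul_assoc, h1, c1]
    abel
  · simp only [Matrix.mul_add, Matrix.add_mul, Matrix.mul_neg, Matrix.neg_mul,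
      Matrix.mul_assoc, h1, h2, c1, Matrix.mul_one]
    abel
  · simp only [Matrix.mul_add, Matrix.add_mul, Matrix.mul_neg, Matrix.neg_mul,
      Matrix.mul_assoc, h1, h2, c1, Matrix.mul_one]
    abel
  · simp only [Matrix.mul_add, Matrix.add_mul, Matrix.mul_neg, Matrix.neg_mul,
      Matrix.mul_assoc, h1, h2, c1, Matrix.mul_one]
    abel

lemma core_decomp (C : Matrix κ κ ℝ) (hC : C.PosDef) (e : (m ⊕ n) ≃ κ) :
    ∃ (B₁ : Matrix m m ℝ) (S : Matrix m n ℝ) (D : Matrix n n ℝ),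
      B₁.PosDef ∧ D.PosDef ∧
      (∀ p q, B₁⁻¹ p q = C⁻¹ (e (Sum.inl p)) (e (Sum.inl q))) ∧
      C = (Matrix.fromBlocks (B₁ + S * D * Sᵀ) (S * D) (D * Sᵀ) D).submatrix
            e.symm e.symm := by
  have hCinv : C⁻¹.PosDef := hC.inv
  have hK : (C⁻¹.submatrix e e).PosDef := posDef_submatrix_equiv hCinv e
  set K : Matrix (m ⊕ n) (m ⊕ n) ℝ := C⁻¹.submatrix e e with hKdef
  set A : Matrix m m ℝ := K.toBlocks₁₁ with hAdef
  set b : Matrix m n ℝ := K.toBlocks₁₂ with hbdef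
  set c : Matrix n n ℝ := K.toBlocks₂₂ with hcdef
  have hKb : K = Matrix.fromBlocks A b bᴴ c := by
    conv_lhs => rw [← Matrix.fromBlocks_toBlocks K]
    refine Matrix.fromBlocks_inj.mpr ⟨rfl, rfl, ?_, rfl⟩
    ext i j
    have h2 : Kᴴ (Sum.inr i) (Sum.inl j) = K (Sum.inr i) (Sum.inl j) :=
      congrFun (congrFun hK.1 _) _
    simp only [Matrix.conjTranspose_apply] at h2
    simp only [Matrix.toBlocks₂₁, Matrix.conjTranspose_apply, Matrix.of_apply, hbdef,
      Matrix.toBlocks₁₂]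
    exact h2.symm
  have hA : A.PosDef := by
    rw [Matrix.posDef_iff_dotProduct_mulVec]
    constructor
    · exact (Matrix.isHermitian_fromBlocks_iff.mp (hKb ▸ hK.1)).1
    · intro x hx
      have hx' : Sum.elim x (0 : n → ℝ) ≠ 0 := by
        intro h
        exact hx (funext fun i => by simpa using congrFun h (Sum.inl i))
      have h0 := hK.dotProduct_mulVec_pos hx'
      rw [hKb, Matrix.fromBlocks_mulVec] at h0
      simpa [Function.star_sumElim, sumElim_dotProduct_sumElim] using h0
  haveI := hA.isUnit.invertible
  have hAu : IsUnit A.det := isUnit_iff_ne_zero.mpr hA.det_pos.ne'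
  have hbt : bᴴ = bᵀ := conjT_eq b
  have hSchur : (c - bᵀ * A⁻¹ * b).PosDef := by
    have := posDef_schur hA (hKb ▸ hK)
    rwa [hbt] at this
  set Δ : Matrix n n ℝ := c - bᵀ * A⁻¹ * b with hΔdef
  have hΔu : IsUnit Δ.det := isUnit_iff_ne_zero.mpr hSchur.det_pos.ne'
  have hAA : (A⁻¹)⁻¹ = A := Matrix.nonsing_inv_nonsing_inv _ hAu
  have hAt : (A⁻¹)ᵀ = A⁻¹ := by
    have hAsym : Aᵀ = A := by rw [← conjT_eq]; exact hA.1
    rw [Matrix.transpose_nonsing_inv, hAsym]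
  refine ⟨A⁻¹, -(A⁻¹ * b), Δ⁻¹, hA.inv, hSchur.inv, ?_, ?_⟩
  · intro p q
    rw [hAA]
    rfl
  · have hKeq : K = Matrix.fromBlocks ((A⁻¹)⁻¹) (-((A⁻¹)⁻¹ * (-(A⁻¹ * b))))
        (-((-(A⁻¹ * b))ᵀ * (A⁻¹)⁻¹))
        ((Δ⁻¹)⁻¹ + (-(A⁻¹ * b))ᵀ * (A⁻¹)⁻¹ * (-(A⁻¹ * b))) := by
      rw [hKb, hbt]
      refine Matrix.fromBlocks_inj.mpr ⟨hAA.symm, ?_, ?_, ?_⟩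
      · rw [hAA, Matrix.mul_neg, neg_neg, Matrix.mul_nonsing_inv_cancel_left A b hAu]
      · rw [hAA, Matrix.transpose_neg, Matrix.transpose_mul, hAt, Matrix.neg_mul, neg_neg,
          Matrix.nonsing_inv_mul_cancel_right A bᵀ hAu]
      · rw [hAA, Matrix.nonsing_inv_nonsing_inv _ hΔu, Matrix.transpose_neg,
          Matrix.transpose_mul, hAt]
        have hcan : bᵀ * A⁻¹ * A = bᵀ := Matrix.nonsing_inv_mul_cancel_right A bᵀ hAu
        have h5 : -(bᵀ * A⁻¹) * A * -(A⁻¹ * b) = bᵀ * A⁻¹ * b := by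
          simp only [Matrix.neg_mul, Matrix.mul_neg, neg_neg]
          rw [hcan, Matrix.mul_assoc]
        rw [h5, hΔdef]
        abel
    have hM : (C.submatrix e e).PosDef := posDef_submatrix_equiv hC e
    have hMu : IsUnit (C.submatrix e e).det := isUnit_iff_ne_zero.mpr hM.det_pos.ne'
    have hMinv : (C.submatrix e e)⁻¹ = K := by
      rw [Matrix.inv_submatrix_equiv]
    have hMK : C.submatrix e e = K⁻¹ := by
      rw [← hMinv, Matrix.nonsing_inv_nonsing_inv _ hMu]
    have hKinv : K⁻¹ = Matrix.fromBlocks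
        (A⁻¹ + (-(A⁻¹ * b)) * Δ⁻¹ * (-(A⁻¹ * b))ᵀ) ((-(A⁻¹ * b)) * Δ⁻¹)
        (Δ⁻¹ * (-(A⁻¹ * b))ᵀ) Δ⁻¹ := by
      rw [hKeq]
      exact Matrix.inv_eq_left_inv
        (mul_eq_one_blocks (Matrix.isUnit_nonsing_inv_det _ hAu)
          (Matrix.isUnit_nonsing_inv_det _ hΔu))
    have hCsub : C = (C.submatrix e e).submatrix e.symm e.symm := by
      ext p q; simp
    rw [hCsub, hMK, hKinv]

lemma gamma_mul_gammaT {κ' : Type*} [Fintype κ'] [DecidableEq κ']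
    (G : Matrix m n ℝ) (D : Matrix n n ℝ) (f : κ' ≃ m) :
    G.submatrix f id * D * (G.submatrix f id)ᵀ
      = (G * D * Gᵀ).submatrix f f := by
  have h1 : G.submatrix f id * D = (G * D).submatrix f id := by
    have := Matrix.submatrix_mul_equiv G D (⇑f) (Equiv.refl n) id
    simpa using this
  rw [h1, Matrix.transpose_submatrix]
  have := Matrix.submatrix_mul_equiv (G * D) Gᵀ (⇑f) (Equiv.refl n) (⇑f)
  simpa using this

end Aux15

/-- The reindexing equivalence for the CM_L case: `inl` is blocks `0,…,N-1`,
`inr` is block `N`. -/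
def eL (N d : ℕ) : ((Fin N × Fin d) ⊕ Fin d) ≃ (Fin (N + 1) × Fin d) where
  toFun := Sum.elim (fun p => (p.1.castSucc, p.2)) (fun a => (Fin.last N, a))
  invFun := fun p =>
    if h : (p.1 : ℕ) < N then Sum.inl (⟨(p.1 : ℕ), h⟩, p.2) else Sum.inr p.2
  left_inv := by
    rintro (⟨i, a⟩ | a)
    · exact dif_pos i.isLt
    · exact dif_neg (by simp)
  right_inv := by
    rintro ⟨p, a⟩
    show Sum.elim (fun q : Fin N × Fin d => (q.1.castSucc, q.2)) (fun b => (Fin.last N, b))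
        (if h : (p : ℕ) < N then Sum.inl (⟨(p : ℕ), h⟩, a) else Sum.inr a) = (p, a)
    by_cases h : (p : ℕ) < N
    · rw [dif_pos h, Sum.elim_inl]
      exact Prod.ext (Fin.ext rfl) rfl
    · rw [dif_neg h, Sum.elim_inr]
      congr 1
      refine Fin.ext ?_
      have := p.isLt
      simp only [Fin.val_last]
      omega

/-- The reindexing equivalence for the CM_F case: `inl` is blocks `1,…,N`,
`inr` is block `0`. -/
def eF (N d : ℕ) : ((Fin N × Fin d) ⊕ Fin d) ≃ (Fin (N + 1) × Fin d) where
  toFun := Sum.elim (fun p => (p.1.succ, p.2)) (fun a => ((0 : Fin (N + 1)), a))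
  invFun := fun p =>
    if h : 0 < (p.1 : ℕ) then
      Sum.inl (⟨(p.1 : ℕ) - 1, by have := p.1.isLt; omega⟩, p.2)
    else Sum.inr p.2
  left_inv := by
    rintro (⟨i, a⟩ | a)
    · exact dif_pos (Nat.succ_pos _)
    · exact dif_neg (by simp)
  right_inv := by
    rintro ⟨p, a⟩
    show Sum.elim (fun q : Fin N × Fin d => (q.1.succ, q.2)) (fun b => ((0 : Fin (N + 1)), b))
        (if h : 0 < (p : ℕ) then
          Sum.inl (⟨(p : ℕ) - 1, by have := p.isLt; omega⟩, a)
        else Sum.inr a) = (p, a)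
    by_cases h : 0 < (p : ℕ)
    · rw [dif_pos h, Sum.elim_inl]
      congr 1
      refine Fin.ext ?_
      show (p : ℕ) - 1 + 1 = (p : ℕ)
      omega
    · rw [dif_neg h, Sum.elim_inr]
      congr 1
      refine Fin.ext ?_
      show 0 = (p : ℕ)
      omega

lemma eL_symm_lt {N d : ℕ} {p : Fin (N + 1)} (a : Fin d) (h : (p : ℕ) < N) :
    (eL N d).symm (p, a) = Sum.inl (⟨(p : ℕ), h⟩, a) := by
  simp only [eL, Equiv.coe_fn_symm_mk]
  exact dif_pos h

lemma eL_symm_ge {N d : ℕ} {p : Fin (N + 1)} (a : Fin d) (h : ¬ (p : ℕ) < N) :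
    (eL N d).symm (p, a) = Sum.inr a := by
  simp only [eL, Equiv.coe_fn_symm_mk]
  exact dif_neg h

lemma eF_symm_pos {N d : ℕ} {p : Fin (N + 1)} (a : Fin d) (h : 0 < (p : ℕ)) :
    (eF N d).symm (p, a) = Sum.inl (⟨(p : ℕ) - 1, by have := p.isLt; omega⟩, a) := by
  simp only [eF, Equiv.coe_fn_symm_mk]
  exact dif_pos h

lemma eF_symm_zero {N d : ℕ} {p : Fin (N + 1)} (a : Fin d) (h : ¬ 0 < (p : ℕ)) :
    (eF N d).symm (p, a) = Sum.inr a := by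
  simp only [eF, Equiv.coe_fn_symm_mk]
  exact dif_neg h

lemma embedL_eq {N d : ℕ} (B₁ : Matrix (Fin N × Fin d) (Fin N × Fin d) ℝ) :
    embedL N d B₁ =
      (Matrix.fromBlocks B₁ 0 0 (0 : Mat d)).submatrix (eL N d).symm (eL N d).symm := by
  ext ⟨p, a⟩ ⟨q, b⟩
  by_cases hp : (p : ℕ) < N <;> by_cases hq : (q : ℕ) < N <;>
    simp [embedL, Matrix.submatrix_apply, eL_symm_lt, eL_symm_ge, hp, hq,
      Matrix.fromBlocks]

lemma gammaL_eq {N d : ℕ} (S : Matrix (Fin N × Fin d) (Fin d) ℝ) :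
    gammaL N d S = (Matrix.fromRows S (1 : Mat d)).submatrix (eL N d).symm id := by
  ext ⟨p, a⟩ c
  by_cases hp : (p : ℕ) < N <;>
    simp [gammaL, Matrix.submatrix_apply, eL_symm_lt, eL_symm_ge, hp]

lemma embedF_eq {N d : ℕ} (B₁ : Matrix (Fin N × Fin d) (Fin N × Fin d) ℝ) :
    embedF N d B₁ =
      (Matrix.fromBlocks B₁ 0 0 (0 : Mat d)).submatrix (eF N d).symm (eF N d).symm := by
  ext ⟨p, a⟩ ⟨q, b⟩
  by_cases hp : 0 < (p : ℕ) <;> by_cases hq : 0 < (q : ℕ) <;>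
    simp [embedF, Matrix.submatrix_apply, eF_symm_pos, eF_symm_zero, hp, hq,
      Matrix.fromBlocks]

lemma gammaF_eq {N d : ℕ} (S : Matrix (Fin N × Fin d) (Fin d) ℝ) :
    gammaF N d S = (Matrix.fromRows S (1 : Mat d)).submatrix (eF N d).symm id := by
  ext ⟨p, a⟩ c
  by_cases hp : 0 < (p : ℕ) <;>
    simp [gammaF, Matrix.submatrix_apply, eF_symm_pos, eF_symm_zero, hp]

lemma decomp_generic {N d : ℕ} (f : (Fin (N + 1) × Fin d) ≃ ((Fin N × Fin d) ⊕ Fin d))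
    (B₁ : Matrix (Fin N × Fin d) (Fin N × Fin d) ℝ)
    (S : Matrix (Fin N × Fin d) (Fin d) ℝ) (D : Mat d) :
    (Matrix.fromBlocks B₁ 0 0 (0 : Mat d)).submatrix f f +
      (Matrix.fromRows S (1 : Mat d)).submatrix f id * D *
        ((Matrix.fromRows S (1 : Mat d)).submatrix f id)ᵀ =
      (Matrix.fromBlocks (B₁ + S * D * Sᵀ) (S * D) (D * Sᵀ) D).submatrix f f := by
  rw [gamma_mul_gammaT]
  rw [Matrix.fromRows_mul, Matrix.one_mul, Matrix.transpose_fromRows, Matrix.transpose_one,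
    Matrix.fromRows_mul_fromCols, Matrix.mul_one]
  have hadd : ∀ (X Y : Matrix ((Fin N × Fin d) ⊕ Fin d) ((Fin N × Fin d) ⊕ Fin d) ℝ),
      X.submatrix f f + Y.submatrix f f = (X + Y).submatrix f f := by
    intro X Y; ext p q; simp
  rw [hadd, Matrix.fromBlocks_add]
  simp

/-- Let `C` be an `(N+1)d × (N+1)d` symmetric positive definite
matrix viewed as `(N+1) × (N+1)` blocks of size `d × d`. (i) `C⁻¹` has the CM_L
form iff `C = B + Γ D Γ'` with `B = [[B₁,0],[0,0]]`, `B₁` positive definite with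
block tri-diagonal inverse, `D` positive definite `d × d`, and `Γ = [S; I]`.
(ii) `C⁻¹` has the CM_F form iff `C = B + Γ D Γ'` with `B = [[0,0],[0,B₁]]`,
`B₁` positive definite with block tri-diagonal inverse, `D` positive definite,
and `Γ = [I; S]`. -/
theorem stmt15 {N d : ℕ} (hN : 3 ≤ N) (hd : 1 ≤ d)
    (C : Matrix (Fin (N + 1) × Fin d) (Fin (N + 1) × Fin d) ℝ)
    (hC : C.PosDef) :
    (HasCMLForm C⁻¹ ↔
      ∃ (B₁ : Matrix (Fin N × Fin d) (Fin N × Fin d) ℝ)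
        (S : Matrix (Fin N × Fin d) (Fin d) ℝ) (D : Mat d),
        B₁.PosDef ∧ BlockTriDiag B₁⁻¹ ∧ D.PosDef ∧
        C = embedL N d B₁ + gammaL N d S * D * (gammaL N d S)ᵀ) ∧
    (HasCMFForm C⁻¹ ↔
      ∃ (B₁ : Matrix (Fin N × Fin d) (Fin N × Fin d) ℝ)
        (S : Matrix (Fin N × Fin d) (Fin d) ℝ) (D : Mat d),
        B₁.PosDef ∧ BlockTriDiag B₁⁻¹ ∧ D.PosDef ∧
        C = embedF N d B₁ + gammaF N d S * D * (gammaF N d S)ᵀ) := by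
  constructor
  · -- CM_L case
    constructor
    · intro h
      obtain ⟨B₁, S, D, hB, hD, hblock, hCeq⟩ := core_decomp C hC (eL N d)
      refine ⟨B₁, S, D, hB, ?_, hD, ?_⟩
      · intro i j hf a b
        rw [hblock (i, a) (j, b),
          show (eL N d) (Sum.inl (i, a)) = (i.castSucc, a) from rfl,
          show (eL N d) (Sum.inl (j, b)) = (j.castSucc, b) from rfl]
        refine h i.castSucc j.castSucc hf ?_ ?_ a b
        · show (i : ℕ) ≠ N + 1 - 1
          have := i.isLt; omega
        · show (j : ℕ) ≠ N + 1 - 1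
          have := j.isLt; omega
      · rw [embedL_eq, gammaL_eq, decomp_generic]
        exact hCeq
    · rintro ⟨B₁, S, D, hB, hTri, hD, hCeq⟩
      have hBu : IsUnit B₁.det := isUnit_iff_ne_zero.mpr hB.det_pos.ne'
      have hDu : IsUnit D.det := isUnit_iff_ne_zero.mpr hD.det_pos.ne'
      have hC' : C = (Matrix.fromBlocks (B₁ + S * D * Sᵀ) (S * D) (D * Sᵀ) D).submatrix
          (eL N d).symm (eL N d).symm := by
        rw [hCeq, embedL_eq, gammaL_eq, decomp_generic]
      have hCinv : C⁻¹ = (Matrix.fromBlocks B₁⁻¹ (-(B₁⁻¹ * S)) (-(Sᵀ * B₁⁻¹))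
          (D⁻¹ + Sᵀ * B₁⁻¹ * S)).submatrix (eL N d).symm (eL N d).symm := by
        rw [hC', Matrix.inv_submatrix_equiv,
          Matrix.inv_eq_right_inv (mul_eq_one_blocks hBu hDu)]
      intro i j hf hi hj a b
      have hi' : (i : ℕ) < N := by have := i.isLt; omega
      have hj' : (j : ℕ) < N := by have := j.isLt; omega
      rw [hCinv, Matrix.submatrix_apply, eL_symm_lt a hi', eL_symm_lt b hj',
        Matrix.fromBlocks_apply₁₁]
      exact hTri ⟨(i : ℕ), hi'⟩ ⟨(j : ℕ), hj'⟩ hf a b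
  · -- CM_F case
    constructor
    · intro h
      obtain ⟨B₁, S, D, hB, hD, hblock, hCeq⟩ := core_decomp C hC (eF N d)
      refine ⟨B₁, S, D, hB, ?_, hD, ?_⟩
      · intro i j hf a b
        rw [hblock (i, a) (j, b),
          show (eF N d) (Sum.inl (i, a)) = (i.succ, a) from rfl,
          show (eF N d) (Sum.inl (j, b)) = (j.succ, b) from rfl]
        refine h i.succ j.succ ?_ ?_ ?_ a b
        · rcases hf with hle | hle
          · exact Or.inl (show (i : ℕ) + 1 + 2 ≤ (j : ℕ) + 1 by omega)
          · exact Or.inr (show (j : ℕ) + 1 + 2 ≤ (i : ℕ) + 1 by omega)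
        · show (i : ℕ) + 1 ≠ 0
          omega
        · show (j : ℕ) + 1 ≠ 0
          omega
      · rw [embedF_eq, gammaF_eq, decomp_generic]
        exact hCeq
    · rintro ⟨B₁, S, D, hB, hTri, hD, hCeq⟩
      have hBu : IsUnit B₁.det := isUnit_iff_ne_zero.mpr hB.det_pos.ne'
      have hDu : IsUnit D.det := isUnit_iff_ne_zero.mpr hD.det_pos.ne'
      have hC' : C = (Matrix.fromBlocks (B₁ + S * D * Sᵀ) (S * D) (D * Sᵀ) D).submatrix
          (eF N d).symm (eF N d).symm := by
        rw [hCeq, embedF_eq, gammaF_eq, decomp_generic]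
      have hCinv : C⁻¹ = (Matrix.fromBlocks B₁⁻¹ (-(B₁⁻¹ * S)) (-(Sᵀ * B₁⁻¹))
          (D⁻¹ + Sᵀ * B₁⁻¹ * S)).submatrix (eF N d).symm (eF N d).symm := by
        rw [hC', Matrix.inv_submatrix_equiv,
          Matrix.inv_eq_right_inv (mul_eq_one_blocks hBu hDu)]
      intro i j hf hi hj a b
      have hi' : 0 < (i : ℕ) := by omega
      have hj' : 0 < (j : ℕ) := by omega
      have hi2 : (i : ℕ) - 1 < N := by have := i.isLt; omega
      have hj2 : (j : ℕ) - 1 < N := by have := j.isLt; omega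
      rw [hCinv, Matrix.submatrix_apply, eF_symm_pos a hi', eF_symm_pos b hj',
        Matrix.fromBlocks_apply₁₁]
      refine hTri ⟨(i : ℕ) - 1, hi2⟩ ⟨(j : ℕ) - 1, hj2⟩ ?_ a b
      rcases hf with hle | hle
      · exact Or.inl (show (i : ℕ) - 1 + 2 ≤ (j : ℕ) - 1 by omega)
      · exact Or.inr (show (j : ℕ) - 1 + 2 ≤ (i : ℕ) - 1 by omega)

end CMSeqPaper
end
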